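/- arXiv:0904.0922 — 5 statements merged into one kernel-verified Lean document; each statement's English description precedes it below -/
import Mathlib

section
/- (Tate-type integral, one variable.) For φ ∈ 𝒮(ℝ), the function Z(φ,s) = ∫_{ℝ^×} φ(t)|t|^{s-1} dt, initially defined and holomorphic for Re(s) > 0, extends to a meromorphic function on ℂ, and for each polynomial p and each vertical strip a ≤ Re(s) ≤ b avoiding the poles, the product p(s)·Z(φ,s) is bounded as |Im s| → ∞ in that strip. -/
/-
For `re s > 0` the integral over `ℝ^×` is the Mellin transform of `ψ(t) = φ(t) + φ(-t)` on
`(0, ∞)`. Integrating by parts `n` times,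
`mellin ψ s = (-1)ⁿ · mellin ψ⁽ⁿ⁾ (s + n) / (s (s + 1) ⋯ (s + n - 1))`,
and the right side is meromorphic on `re s > -n`; these continuations agree on overlaps and glue
to a meromorphic function on `ℂ`. On a vertical strip `mellin ψ⁽ⁿ⁾ (s + n)` is bounded (the
integrand is dominated by those at the two edges) while `|s + k| ≥ |im s|`, so the continuation is
`O(|im s|⁻ⁿ)` for every `n`, which beats any polynomial.
-/

open MeasureTheory Set Filter Asymptotics Complex Topology Finset

theorem Real.rpow_le_rpow_add_rpow {t x y z : ℝ} (ht : 0 < t) (hyx : y ≤ x) (hxz : x ≤ z) :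
    t ^ x ≤ t ^ y + t ^ z := by
  rcases le_total t 1 with h | h
  · exact (Real.rpow_le_rpow_of_exponent_ge ht h hyx).trans (le_add_of_nonneg_right (by positivity))
  · exact (Real.rpow_le_rpow_of_exponent_le h hxz).trans (le_add_of_nonneg_left (by positivity))

theorem neg_natCeil_neg_add_one_lt (x : ℝ) : -((⌈-x⌉₊ + 1 : ℕ) : ℝ) < x := by
  have := Nat.le_ceil (-x)
  push_cast
  linarith

theorem abs_im_pow_le_norm_prod_add_natCast (s : ℂ) (n : ℕ) :
    |s.im| ^ n ≤ ‖∏ k ∈ range n, (s + k)‖ := by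
  have := Finset.prod_le_prod (s := range n) (fun _ _ => abs_nonneg s.im)
    fun k _ => (abs_im_le_norm (s + k)).trans_eq' (by simp)
  simpa [norm_prod] using this

theorem Polynomial.norm_eval_le_of_norm_le {R : Type*} [SeminormedRing R] [NormOneClass R]
    (p : Polynomial R) {z : R} {r : ℝ} (hr : 1 ≤ r) (hz : ‖z‖ ≤ r) :
    ‖p.eval z‖ ≤ (∑ i ∈ range (p.natDegree + 1), ‖p.coeff i‖) * r ^ p.natDegree := by
  rw [p.eval_eq_sum_range, Finset.sum_mul]
  refine (norm_sum_le _ _).trans (Finset.sum_le_sum fun i hi => ?_)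
  have hi : i ≤ p.natDegree := Nat.lt_succ_iff.mp (Finset.mem_range.mp hi)
  calc ‖p.coeff i * z ^ i‖ ≤ ‖p.coeff i‖ * ‖z‖ ^ i :=
        (norm_mul_le _ _).trans (mul_le_mul_of_nonneg_left (norm_pow_le _ _) (norm_nonneg _))
    _ ≤ ‖p.coeff i‖ * r ^ p.natDegree := by
        gcongr
        exact (pow_le_pow_left₀ (norm_nonneg _) hz i).trans (pow_le_pow_right₀ hr hi)

theorem Polynomial.exists_norm_eval_le_abs_im_pow (p : Polynomial ℂ) (a b : ℝ) :
    ∃ C, ∀ s : ℂ, a ≤ s.re → s.re ≤ b → 1 ≤ |s.im| → ‖p.eval s‖ ≤ C * |s.im| ^ p.natDegree := by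
  set K := |a| + |b| + 1
  refine ⟨(∑ i ∈ range (p.natDegree + 1), ‖p.coeff i‖) * K ^ p.natDegree,
    fun s has hsb him => ?_⟩
  have hre : |s.re| ≤ |a| + |b| := abs_le.2 ⟨by linarith [neg_abs_le a, abs_nonneg b],
    by linarith [le_abs_self b, abs_nonneg a]⟩
  have hs : ‖s‖ ≤ K * |s.im| := by
    nlinarith [norm_le_abs_re_add_abs_im s, abs_nonneg a, abs_nonneg b]
  have hK : 1 ≤ K * |s.im| := by nlinarith [abs_nonneg a, abs_nonneg b]
  rw [mul_assoc, ← mul_pow]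
  exact p.norm_eval_le_of_norm_le hK hs

theorem integral_eq_integral_Ioi_add_comp_neg {E : Type*} [NormedAddCommGroup E]
    [NormedSpace ℝ E] {g : ℝ → E} (h₁ : IntegrableOn g (Ioi 0))
    (h₂ : IntegrableOn (fun x => g (-x)) (Ioi 0)) :
    ∫ x, g x = ∫ x in Ioi 0, (g x + g (-x)) := by
  have h₃ : IntegrableOn g (Iic 0) := by
    rw [← (Measure.measurePreserving_neg volume).integrableOn_comp_preimage
      (Homeomorph.neg ℝ).measurableEmbedding, neg_preimage, neg_Iic, neg_zero]
    exact (integrableOn_Ici_iff_integrableOn_Ioi).2 h₂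
  rw [integral_add h₁ h₂, integral_comp_neg_Ioi, neg_zero, add_comm,
    intervalIntegral.integral_Iic_add_Ioi h₃ h₁]

section Mellin

variable {E : Type*} [NormedAddCommGroup E] [NormedSpace ℂ E]

theorem norm_cpow_sub_one_smul {f : ℝ → E} {t : ℝ} (ht : 0 < t) (w : ℂ) :
    ‖(t : ℂ) ^ (w - 1) • f t‖ = t ^ (w.re - 1) * ‖f t‖ := by
  rw [norm_smul, norm_cpow_eq_rpow_re_of_pos ht, sub_re, one_re]

theorem exists_norm_mellin_le_of_re_mem {f : ℝ → E} {σ₁ σ₂ : ℝ}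
    (h₁ : MellinConvergent f σ₁) (h₂ : MellinConvergent f σ₂) :
    ∃ B, ∀ w : ℂ, σ₁ ≤ w.re → w.re ≤ σ₂ → ‖mellin f w‖ ≤ B := by
  have hint : ∀ σ : ℝ, MellinConvergent f σ →
      IntegrableOn (fun t : ℝ => t ^ (σ - 1) * ‖f t‖) (Ioi 0) := fun σ h =>
    IntegrableOn.congr_fun h.norm (fun t ht => by simp [norm_cpow_sub_one_smul ht])
      measurableSet_Ioi
  refine ⟨∫ t in Ioi 0, (t ^ (σ₁ - 1) + t ^ (σ₂ - 1)) * ‖f t‖, fun w hw₁ hw₂ => ?_⟩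
  refine norm_integral_le_of_norm_le ?_ (ae_restrict_of_forall_mem measurableSet_Ioi fun t ht => ?_)
  · simpa only [add_mul, Pi.add_def, IntegrableOn] using (hint σ₁ h₁).add (hint σ₂ h₂)
  · rw [norm_cpow_sub_one_smul ht]
    exact mul_le_mul_of_nonneg_right
      (Real.rpow_le_rpow_add_rpow ht (by linarith) (by linarith)) (norm_nonneg _)

end Mellin

namespace SchwartzMap

variable {E : Type*} [NormedAddCommGroup E] [NormedSpace ℂ E]

theorem isBigO_atTop_rpow_neg (f : 𝓢(ℝ, E)) (a : ℝ) : (f : ℝ → E) =O[atTop] (· ^ (-a)) := by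
  refine ((f.isBigO_cocompact_rpow (-a)).mono (by simp [cocompact_eq_atBot_atTop])).congr' .rfl ?_
  filter_upwards [eventually_ge_atTop 0] with x hx
  rw [Real.norm_of_nonneg hx]

-- The exponent `-0` is the shape `mellinConvergent_of_isBigO_rpow` expects at `0`.
theorem isBigO_nhdsGT_zero_rpow_zero (f : 𝓢(ℝ, E)) :
    (f : ℝ → E) =O[𝓝[>] 0] (· ^ (-0 : ℝ)) := by
  simpa using ((f.continuous.tendsto 0).mono_left nhdsWithin_le_nhds).isBigO_one ℝ

theorem mellinConvergent (f : 𝓢(ℝ, E)) {s : ℂ} (hs : 0 < s.re) : MellinConvergent f s :=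
  mellinConvergent_of_isBigO_rpow (f.continuous.locallyIntegrable.locallyIntegrableOn _)
    (f.isBigO_atTop_rpow_neg (s.re + 1)) (by linarith) f.isBigO_nhdsGT_zero_rpow_zero (by simpa)

theorem differentiableAt_mellin (f : 𝓢(ℝ, E)) {s : ℂ} (hs : 0 < s.re) :
    DifferentiableAt ℂ (mellin f) s :=
  mellin_differentiableAt_of_isBigO_rpow (f.continuous.locallyIntegrable.locallyIntegrableOn _)
    (f.isBigO_atTop_rpow_neg (s.re + 1)) (by linarith) f.isBigO_nhdsGT_zero_rpow_zero (by simpa)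

theorem tendsto_cpow_mul_atTop (f : 𝓢(ℝ, ℂ)) (s : ℂ) :
    Tendsto (fun t : ℝ => (t : ℂ) ^ s * f t) atTop (𝓝 0) := by
  have hpow : (fun t : ℝ => (t : ℂ) ^ s) =O[atTop] (· ^ s.re) :=
    IsBigO.of_bound 1 <| by
      filter_upwards [eventually_gt_atTop 0] with t ht
      rw [norm_cpow_eq_rpow_re_of_pos ht, one_mul, Real.norm_of_nonneg (by positivity)]
  refine (hpow.mul (f.isBigO_atTop_rpow_neg (s.re + 1))).trans_tendsto ?_
  refine (tendsto_rpow_neg_atTop one_pos).congr' ?_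
  filter_upwards [eventually_gt_atTop 0] with t ht
  rw [← Real.rpow_add ht]
  ring_nf

theorem tendsto_cpow_mul_nhdsGT_zero (f : 𝓢(ℝ, ℂ)) {s : ℂ} (hs : 0 < s.re) :
    Tendsto (fun t : ℝ => (t : ℂ) ^ s * f t) (𝓝[>] 0) (𝓝 0) := by
  have hpow := (continuousAt_ofReal_cpow_const 0 s (.inl hs)).tendsto
  rw [ofReal_zero, zero_cpow (by rintro rfl; simp at hs)] at hpow
  simpa using (hpow.mul (f.continuous.tendsto 0)).mono_left nhdsWithin_le_nhds

theorem mellin_derivCLM (f : 𝓢(ℝ, ℂ)) {s : ℂ} (hs : 0 < s.re) :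
    mellin (derivCLM ℝ ℂ f) (s + 1) = -(s * mellin f s) := by
  have hs₀ : s ≠ 0 := by rintro rfl; simp at hs
  have hpow : ∀ t ∈ Ioi (0 : ℝ), HasDerivAt (fun t : ℝ => (t : ℂ) ^ s) (s * (t : ℂ) ^ (s - 1)) t :=
    fun t ht => by simpa using (hasDerivAt_ofReal_cpow_const (ne_of_gt ht) hs₀)
  have hibp := integral_Ioi_mul_deriv_eq_deriv_mul hpow (fun t _ => f.hasDerivAt t)
    ?_ ?_ (f.tendsto_cpow_mul_nhdsGT_zero hs) (f.tendsto_cpow_mul_atTop s)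
  · simp only [mellin, derivCLM_apply, add_sub_cancel_right, smul_eq_mul]
    rw [hibp, ← integral_const_mul]
    simp [mul_assoc]
  · simpa [MellinConvergent, Pi.mul_def] using
      (derivCLM ℝ ℂ f).mellinConvergent (s := s + 1) (by simp; linarith)
  · simpa [IntegrableOn, Pi.mul_def, mul_assoc] using (f.mellinConvergent hs).const_mul s

theorem integral_mul_abs_cpow_eq_mellin (φ : 𝓢(ℝ, ℂ)) {s : ℂ} (hs : 0 < s.re) :
    ∫ t : ℝ, φ t * ((|t| : ℝ) : ℂ) ^ (s - 1) =
      mellin (φ + compCLMOfContinuousLinearEquiv ℝ (.neg ℝ) φ) s := by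
  set φ' := compCLMOfContinuousLinearEquiv ℝ (.neg ℝ) φ
  have hφ' : ∀ t, φ' t = φ (-t) := fun _ => rfl
  rw [integral_eq_integral_Ioi_add_comp_neg, mellin]
  · refine setIntegral_congr_fun measurableSet_Ioi fun t ht => ?_
    simp [abs_of_pos (mem_Ioi.1 ht), hφ']
    ring
  · exact (φ.mellinConvergent hs).congr_fun (fun t ht => by
      simp [abs_of_pos (mem_Ioi.1 ht), mul_comm]) measurableSet_Ioi
  · exact (φ'.mellinConvergent hs).congr_fun (fun t ht => by
      simp [abs_of_pos (mem_Ioi.1 ht), hφ', mul_comm]) measurableSet_Ioi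

variable (f : 𝓢(ℝ, ℂ))

/-- The `n`-fold integration by parts formula for `mellin f s`; it continues `mellin f` to
`re s > -n`, with poles at most at `0, -1, …, -(n - 1)`. -/
noncomputable def mellinCont (n : ℕ) (s : ℂ) : ℂ :=
  (-1) ^ n * mellin ((derivCLM ℝ ℂ ^ n) f) (s + n) / ∏ k ∈ range n, (s + k)

theorem mellinCont_zero : f.mellinCont 0 = mellin f := by
  ext s
  simp [mellinCont]

theorem mellinCont_succ {n : ℕ} {s : ℂ} (hs : -(n : ℝ) < s.re) :
    f.mellinCont (n + 1) s = f.mellinCont n s := by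
  have hw : 0 < (s + n).re := by simp; linarith
  have hw₀ : s + n ≠ 0 := fun h => by simp [h] at hw
  rw [mellinCont, mellinCont, pow_succ' (derivCLM ℝ ℂ), mul_apply_eq_comp, Nat.cast_succ,
    ← add_assoc, mellin_derivCLM _ hw, prod_range_succ,
    ← mul_div_mul_right ((-1) ^ n * mellin ((derivCLM ℝ ℂ ^ n) f) (s + n)) _ hw₀]
  ring

theorem mellinCont_eq_of_le {n m : ℕ} (hnm : n ≤ m) {s : ℂ} (hs : -(n : ℝ) < s.re) :
    f.mellinCont m s = f.mellinCont n s := by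
  induction m, hnm using Nat.le_induction with
  | base => rfl
  | succ m hnm ih =>
    rw [f.mellinCont_succ (lt_of_le_of_lt (by simpa using hnm) hs), ih]

theorem mellinCont_meromorphicAt {n : ℕ} {z : ℂ} (hz : -(n : ℝ) < z.re) :
    MeromorphicAt (f.mellinCont n) z := by
  set g := (derivCLM ℝ ℂ ^ n) f
  have hnum : AnalyticAt ℂ (fun s => mellin g (s + n)) z := by
    refine DifferentiableOn.analyticAt (fun s hs => ?_)
      ((isOpen_lt continuous_const continuous_re).mem_nhds hz)
    have hs' : 0 < (s + n).re := by simp; linarith [show -(n : ℝ) < s.re from hs]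
    exact ((g.differentiableAt_mellin hs').comp s
      (differentiableAt_id.add_const _)).differentiableWithinAt
  have hden : AnalyticAt ℂ (fun s : ℂ => ∏ k ∈ range n, (s + k)) z := by fun_prop
  exact (analyticAt_const.mul hnum).meromorphicAt.div hden.meromorphicAt

theorem exists_norm_mellinCont_mul_abs_im_pow_le {n : ℕ} {a : ℝ} (ha : -(n : ℝ) < a) (b : ℝ) :
    ∃ B, ∀ s : ℂ, a ≤ s.re → s.re ≤ b → ‖f.mellinCont n s‖ * |s.im| ^ n ≤ B := by
  set g := (derivCLM ℝ ℂ ^ n) f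
  obtain ⟨B, hB⟩ := exists_norm_mellin_le_of_re_mem
    (g.mellinConvergent (s := (a + n : ℝ)) (by simp; linarith))
    (g.mellinConvergent (s := (max a b + n : ℝ)) (by simp; linarith [le_max_left a b]))
  refine ⟨B, fun s has hsb => ?_⟩
  calc ‖f.mellinCont n s‖ * |s.im| ^ n
      = ‖mellin g (s + n)‖ * (|s.im| ^ n / ‖∏ k ∈ range n, (s + k)‖) := by
        rw [mellinCont, norm_div, norm_mul, norm_pow, norm_neg, norm_one, one_pow, one_mul]
        ring
    _ ≤ ‖mellin g (s + n)‖ := mul_le_of_le_one_right (norm_nonneg _)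
        (div_le_one_of_le₀ (abs_im_pow_le_norm_prod_add_natCast s n) (norm_nonneg _))
    _ ≤ B := hB _ (by simp only [add_re, natCast_re]; linarith)
        (by simp only [add_re, natCast_re]; linarith [le_max_right a b])

-- Any index `n > -re s` gives the same value (`mellinExt_eq_mellinCont`).
noncomputable def mellinExt (s : ℂ) : ℂ :=
  f.mellinCont (⌈-s.re⌉₊ + 1) s

theorem mellinExt_eq_mellinCont {n : ℕ} {s : ℂ} (hs : -(n : ℝ) < s.re) :
    f.mellinExt s = f.mellinCont n s := by
  rw [mellinExt, ← f.mellinCont_eq_of_le (le_max_left _ n) (neg_natCeil_neg_add_one_lt s.re),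
    f.mellinCont_eq_of_le (le_max_right _ n) hs]

theorem mellinExt_eq_mellin {s : ℂ} (hs : 0 < s.re) : f.mellinExt s = mellin f s := by
  rw [f.mellinExt_eq_mellinCont (n := 0) (by simpa), mellinCont_zero]

theorem differentiableOn_mellinExt : DifferentiableOn ℂ f.mellinExt {s | 0 < s.re} :=
  fun _ hs => (f.differentiableAt_mellin hs).differentiableWithinAt.congr
    (fun _ hw => f.mellinExt_eq_mellin hw) (f.mellinExt_eq_mellin hs)

theorem meromorphicOn_mellinExt : MeromorphicOn f.mellinExt univ := fun z _ => by
  have hz := neg_natCeil_neg_add_one_lt z.re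
  refine (f.mellinCont_meromorphicAt hz).congr ?_
  filter_upwards [nhdsWithin_le_nhds ((isOpen_lt continuous_const continuous_re).mem_nhds hz)]
    with s hs
  exact (f.mellinExt_eq_mellinCont hs).symm

theorem exists_norm_mellinExt_mul_abs_im_pow_le (n : ℕ) (a b : ℝ) :
    ∃ B, ∀ s : ℂ, a ≤ s.re → s.re ≤ b → 1 ≤ |s.im| → ‖f.mellinExt s‖ * |s.im| ^ n ≤ B := by
  set m := n + (⌈-a⌉₊ + 1)
  have hm : -(m : ℝ) < a := by
    have := Nat.le_ceil (-a)
    push_cast [m]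
    linarith [n.cast_nonneg (α := ℝ)]
  obtain ⟨B, hB⟩ := f.exists_norm_mellinCont_mul_abs_im_pow_le hm b
  refine ⟨B, fun s has hsb him => ?_⟩
  calc ‖f.mellinExt s‖ * |s.im| ^ n ≤ ‖f.mellinExt s‖ * |s.im| ^ m :=
        mul_le_mul_of_nonneg_left (pow_le_pow_right₀ him (by omega)) (norm_nonneg _)
    _ ≤ B := by rw [f.mellinExt_eq_mellinCont (by linarith)]; exact hB s has hsb

end SchwartzMap

/-- Tate-type integral in one variable: for `φ ∈ 𝒮(ℝ)`, the function
`Z(φ,s) = ∫_{ℝ^×} φ(t)|t|^{s-1} dt`, initially defined and holomorphic for `Re(s) > 0`,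
extends to a meromorphic function on `ℂ`, and for each polynomial `p` and each vertical
strip `a ≤ Re(s) ≤ b` avoiding the poles (i.e. on which the extension is analytic), the
product `p(s)·Z(φ,s)` is bounded as `|Im s| → ∞` in that strip. -/
theorem stmt8 (φ : SchwartzMap ℝ ℂ) :
    ∃ Z : ℂ → ℂ,
      (∀ s : ℂ, 0 < s.re → Z s = ∫ t : ℝ, φ t * ((|t| : ℝ) : ℂ) ^ (s - 1)) ∧
      DifferentiableOn ℂ Z {s : ℂ | 0 < s.re} ∧
      MeromorphicOn Z Set.univ ∧
      ∀ (p : Polynomial ℂ) (a b : ℝ), a ≤ b →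
        (∀ s : ℂ, a ≤ s.re → s.re ≤ b → AnalyticAt ℂ Z s) →
        ∃ C : ℝ, ∃ Δ : ℝ, 0 < Δ ∧ ∀ s : ℂ, a ≤ s.re → s.re ≤ b → Δ ≤ |s.im| →
          ‖p.eval s * Z s‖ ≤ C := by
  set ψ := φ + SchwartzMap.compCLMOfContinuousLinearEquiv ℝ (.neg ℝ) φ
  refine ⟨ψ.mellinExt, fun s hs => ?_, ψ.differentiableOn_mellinExt, ψ.meromorphicOn_mellinExt,
    fun p a b _ _ => ?_⟩
  · rw [ψ.mellinExt_eq_mellin hs, φ.integral_mul_abs_cpow_eq_mellin hs]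
  obtain ⟨C, hC⟩ := p.exists_norm_eval_le_abs_im_pow a b
  obtain ⟨B, hB⟩ := ψ.exists_norm_mellinExt_mul_abs_im_pow_le p.natDegree a b
  refine ⟨C * B, 1, one_pos, fun s has hsb him => ?_⟩
  have hpC := hC s has hsb him
  have hC₀ : 0 ≤ C :=
    nonneg_of_mul_nonneg_left ((norm_nonneg _).trans hpC) (pow_pos (one_pos.trans_le him) _)
  calc ‖p.eval s * ψ.mellinExt s‖ ≤ C * |s.im| ^ p.natDegree * ‖ψ.mellinExt s‖ := by
        rw [norm_mul]
        exact mul_le_mul_of_nonneg_right hpC (norm_nonneg _)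
    _ = C * (‖ψ.mellinExt s‖ * |s.im| ^ p.natDegree) := by ring
    _ ≤ C * B := mul_le_mul_of_nonneg_left (hB s has hsb him) hC₀
end

section
/- Let F = ℝ, G = GL_{2n}(ℝ). Define θ on G by θ(g) = (gᵗ)^{-1} and let w = [[0, Id_n],[-Id_n, 0]]. If λ : V → ℂ satisfies the Shalika equivariance λ(π([[g,A],[0,g]])v) = exp(2πi·Tr(g^{-1}A))·λ(v) for the representation π, then λ^θ defined by λ^θ(v) := λ(π(w)v) satisfies the Shalika equivariance for the representation π^θ given by π^θ(g) := π(θ(g)): that is, λ^θ(π^θ([[g,A],[0,g]])v) = exp(2πi·Tr(g^{-1}A))·λ^θ(v) for all g ∈ GL_n(ℝ), A ∈ Mat(n×n,ℝ), v ∈ V. -/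
/-!
Conjugation by `w` maps `θ` of a Shalika element back into the Shalika subgroup:
`w θ([[g, A], [0, g]]) w⁻¹ = [[h, B], [0, h]]` with `h = (g⁻¹)ᵀ` and `B = (g⁻¹ A g⁻¹)ᵀ`,
and `Tr(h⁻¹ B) = Tr(g⁻¹ A)`. So the equivariance of `λ^θ` is that of `λ` at this conjugate.
-/

open scoped Matrix
open Complex

namespace Matrix

variable {m R : Type*} [Fintype m] [DecidableEq m]

theorem fromBlocks_zero_one_neg_one_zero_mul [Ring R] (a c d : Matrix m m R) :
    fromBlocks 0 1 (-1) 0 * fromBlocks a 0 c d =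
      fromBlocks d (-c) 0 a * fromBlocks 0 1 (-1) 0 := by
  simp [fromBlocks_multiply]

variable [CommRing R]

theorem isUnit_det_fromBlocks_zero_one_neg_one_zero :
    IsUnit (fromBlocks 0 1 (-1) 0 : Matrix (m ⊕ m) (m ⊕ m) R).det :=
  isUnit_det_of_right_inverse (B := fromBlocks 0 (-1) 1 0) (by simp [fromBlocks_multiply])

theorem isUnit_det_fromBlocks_shalika {g : Matrix m m R} (hg : IsUnit g.det) (A : Matrix m m R) :
    IsUnit (fromBlocks g A 0 g).det := by
  rw [det_fromBlocks_zero₂₁]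
  exact hg.mul hg

theorem transpose_inv_fromBlocks_shalika (g A : Matrix m m R) :
    (fromBlocks g A 0 g)ᵀ⁻¹ = fromBlocks g⁻¹ᵀ 0 (-(g⁻¹ * A * g⁻¹))ᵀ g⁻¹ᵀ := by
  rw [← transpose_nonsing_inv, inv_fromBlocks_zero₂₁_of_isUnit_iff g A g Iff.rfl,
    fromBlocks_transpose, transpose_zero]

theorem fromBlocks_zero_one_neg_one_zero_mul_transpose_inv_shalika (g A : Matrix m m R) :
    fromBlocks 0 1 (-1) 0 * (fromBlocks g A 0 g)ᵀ⁻¹ =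
      fromBlocks g⁻¹ᵀ (g⁻¹ * A * g⁻¹)ᵀ 0 g⁻¹ᵀ * fromBlocks 0 1 (-1) 0 := by
  rw [transpose_inv_fromBlocks_shalika, fromBlocks_zero_one_neg_one_zero_mul, transpose_neg,
    neg_neg]

theorem trace_inv_transpose_inv_mul_transpose {g : Matrix m m R} (hg : IsUnit g.det)
    (A : Matrix m m R) : (g⁻¹ᵀ⁻¹ * (g⁻¹ * A * g⁻¹)ᵀ).trace = (g⁻¹ * A).trace := by
  rw [transpose_nonsing_inv, nonsing_inv_nonsing_inv _ (by rwa [det_transpose]),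
    ← transpose_mul, trace_transpose, Matrix.mul_assoc (g⁻¹ * A), nonsing_inv_mul _ hg,
    Matrix.mul_one]

end Matrix

open Matrix in
/-- Let `G = GL_{2n}(ℝ)` (matrices indexed by `Fin n ⊕ Fin n`), `θ(g) = (gᵀ)⁻¹` and
`w = [[0, Id],[-Id, 0]]`. If `λ` satisfies the Shalika equivariance
`λ(π([[g,A],[0,g]])v) = exp(2πi·Tr(g⁻¹A))·λ(v)` for the representation `π`, then
`λ^θ(v) := λ(π(w)v)` satisfies the Shalika equivariance for `π^θ(g) := π(θ(g))`:
`λ^θ(π^θ([[g,A],[0,g]])v) = exp(2πi·Tr(g⁻¹A))·λ^θ(v)`. -/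
theorem stmt12 (n : ℕ) {V : Type*} [AddCommGroup V] [Module ℂ V]
    (π : Matrix (Fin n ⊕ Fin n) (Fin n ⊕ Fin n) ℝ → (V →ₗ[ℂ] V))
    (hπ : ∀ a b : Matrix (Fin n ⊕ Fin n) (Fin n ⊕ Fin n) ℝ,
      IsUnit a.det → IsUnit b.det → π (a * b) = π a * π b)
    (lam : V →ₗ[ℂ] ℂ)
    (heq : ∀ (g A : Matrix (Fin n) (Fin n) ℝ), IsUnit g.det → ∀ v : V,
      lam (π (Matrix.fromBlocks g A 0 g) v) =
        Complex.exp (2 * Real.pi * Complex.I * ((g⁻¹ * A).trace : ℝ)) * lam v) :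
    ∀ (g A : Matrix (Fin n) (Fin n) ℝ), IsUnit g.det → ∀ v : V,
      lam (π (Matrix.fromBlocks 0 1 (-1) 0)
          (π (((Matrix.fromBlocks g A 0 g)ᵀ)⁻¹) v)) =
        Complex.exp (2 * Real.pi * Complex.I * ((g⁻¹ * A).trace : ℝ)) *
          lam (π (Matrix.fromBlocks 0 1 (-1) 0) v) := by
  intro g A hg v
  have hw := isUnit_det_fromBlocks_zero_one_neg_one_zero (m := Fin n) (R := ℝ)
  have hθ : IsUnit (fromBlocks g A 0 g)ᵀ⁻¹.det :=
    isUnit_nonsing_inv_det _ (by rw [det_transpose]; exact isUnit_det_fromBlocks_shalika hg A)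
  have hh : IsUnit g⁻¹ᵀ.det := by rw [det_transpose]; exact isUnit_nonsing_inv_det _ hg
  calc lam (π (fromBlocks 0 1 (-1) 0) (π (fromBlocks g A 0 g)ᵀ⁻¹ v))
      = lam (π (fromBlocks 0 1 (-1) 0 * (fromBlocks g A 0 g)ᵀ⁻¹) v) := by
        rw [hπ _ _ hw hθ, Module.End.mul_apply]
    _ = lam (π (fromBlocks g⁻¹ᵀ (g⁻¹ * A * g⁻¹)ᵀ 0 g⁻¹ᵀ) (π (fromBlocks 0 1 (-1) 0) v)) := by
        rw [fromBlocks_zero_one_neg_one_zero_mul_transpose_inv_shalika,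
          hπ _ _ (isUnit_det_fromBlocks_shalika hh _) hw, Module.End.mul_apply]
    _ = _ := by rw [heq _ _ hh, trace_inv_transpose_inv_mul_transpose hg]
end

section
/- Suppose λ is a continuous functional on a smooth Fréchet representation (π,V) of GL_{2n}(ℝ) such that there exist M > 0 and a continuous seminorm β with |λ(π(ν(h))v)| ≤ |det h|^{-M}·β(v) for all h ∈ GL_n(ℝ), where ν(h) = diag(h, Id_n), and λ(π(u)v) = Ψ(u)λ(v) for u ∈ U (block unipotent) with |Ψ(u)| = 1. Then there is a continuous seminorm γ on V such that for every g ∈ GL_{2n}(ℝ) written in Iwasawa form g = u·diag(a,b)·k with a,b ∈ GL_n(ℝ), u ∈ U, k ∈ O(2n), one has |λ(π(g)v)| ≤ |det(b^{-1}a)|^{-M}·γ(v). -/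
/-!
Factor `diag(a, b) = diag(b, b) · ν(b⁻¹a)`. The `H`-invariance of `λ` absorbs `diag(b, b)` and the
`U`-equivariance only contributes a factor of modulus one, so
`|λ(π(g)v)| = |λ(π(ν(b⁻¹a)) π(k)v)| ≤ |det(b⁻¹a)|^{-M} β(π(k)v)`.
Since `O(2n)` is compact and `(k, v) ↦ π(k)v` is continuous, `γ(v) = sup_k β(π(k)v)` is a
continuous seminorm.
-/

open scoped Matrix

namespace Matrix

theorem isCompact_unitaryGroup (m 𝕜 : Type*) [Fintype m] [DecidableEq m] [RCLike 𝕜] :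
    IsCompact (unitaryGroup m 𝕜 : Set (Matrix m m 𝕜)) := by
  have hbounded : (unitaryGroup m 𝕜 : Set (Matrix m m 𝕜)) ⊆
      Set.univ.pi fun _ => Set.univ.pi fun _ => Metric.closedBall 0 1 :=
    fun U hU i _ j _ => mem_closedBall_zero_iff.mpr (entry_norm_bound_of_unitary hU i j)
  exact (isCompact_univ_pi fun _ => isCompact_univ_pi fun _ => isCompact_closedBall 0 1)
    |>.of_isClosed_subset (isClosed_unitary (R := Matrix m m 𝕜)) hbounded

theorem isUnit_det_fromBlocks_zero₂₁ {m R : Type*} [Fintype m] [DecidableEq m] [CommRing R]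
    {A B D : Matrix m m R} : IsUnit (fromBlocks A B 0 D).det ↔ IsUnit A.det ∧ IsUnit D.det := by
  rw [det_fromBlocks_zero₂₁, IsUnit.mul_iff]

theorem fromBlocks_zero_zero_eq_mul {m R : Type*} [Fintype m] [DecidableEq m] [CommRing R]
    (a : Matrix m m R) {b : Matrix m m R} (hb : IsUnit b.det) :
    fromBlocks a 0 0 b = fromBlocks b 0 0 b * fromBlocks (b⁻¹ * a) 0 0 1 := by
  rw [fromBlocks_multiply]
  congr 1 <;> simp [← Matrix.mul_assoc, mul_nonsing_inv b hb]

end Matrix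

theorem Seminorm.exists_continuous_forall_comp_le {𝕜 K E F : Type*} [NormedField 𝕜]
    [TopologicalSpace K] [CompactSpace K] [AddCommGroup E] [Module 𝕜 E] [TopologicalSpace E]
    [AddCommGroup F] [Module 𝕜 F] [TopologicalSpace F]
    (ρ : K → E →ₗ[𝕜] F) (hρ : Continuous fun p : K × E => ρ p.1 p.2)
    (β : Seminorm 𝕜 F) (hβ : Continuous β) :
    ∃ γ : Seminorm 𝕜 E, Continuous γ ∧ ∀ k v, β (ρ k v) ≤ γ v := by
  have hbdd : BddAbove (Set.range fun k => β.comp (ρ k)) :=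
    Seminorm.bddAbove_range_iff.mpr fun v =>
      (isCompact_range (hβ.comp (hρ.comp (.prodMk_left v)))).bddAbove
  refine ⟨⨆ k, β.comp (ρ k), ?_, fun k v => ?_⟩
  · have hsup : ⇑(⨆ k, β.comp (ρ k)) = fun v => sSup ((fun k => β (ρ k v)) '' Set.univ) := by
      ext v
      rw [Seminorm.iSup_apply hbdd, Set.image_univ, sSup_range]
      rfl
    rw [hsup]
    exact isCompact_univ.continuous_sSup (hβ.comp (hρ.comp continuous_swap))
  · rw [Seminorm.iSup_apply hbdd]
    exact le_ciSup (f := fun k => β.comp (ρ k) v) (Seminorm.bddAbove_range_iff.mp hbdd v) k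

section Iwasawa

open Matrix

variable {m R S V T : Type*} [Fintype m] [DecidableEq m] [CommRing R] [Semiring S]
  [AddCommMonoid V] [Module S V] [Mul T]

theorem apply_iwasawa_eq (π : Matrix (m ⊕ m) (m ⊕ m) R → Module.End S V)
    (hπ : ∀ g h : Matrix (m ⊕ m) (m ⊕ m) R, IsUnit g.det → IsUnit h.det → π (g * h) = π g * π h)
    (lam : V → T) (Ψ : Matrix m m R → T)
    (hU : ∀ A v, lam (π (fromBlocks 1 A 0 1) v) = Ψ A * lam v)
    (hH : ∀ c : Matrix m m R, IsUnit c.det → ∀ v, lam (π (fromBlocks c 0 0 c) v) = lam v)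
    (A : Matrix m m R) {a b : Matrix m m R} (ha : IsUnit a.det) (hb : IsUnit b.det)
    {k : Matrix (m ⊕ m) (m ⊕ m) R} (hk : IsUnit k.det) (v : V) :
    lam (π (fromBlocks 1 A 0 1 * fromBlocks a 0 0 b * k) v) =
      Ψ A * lam (π (fromBlocks (b⁻¹ * a) 0 0 1) (π k v)) := by
  have hu : IsUnit (fromBlocks 1 A 0 1).det := by simp
  have hd : IsUnit (fromBlocks a 0 0 b).det := isUnit_det_fromBlocks_zero₂₁.mpr ⟨ha, hb⟩
  have hbb : IsUnit (fromBlocks b 0 0 b).det := isUnit_det_fromBlocks_zero₂₁.mpr ⟨hb, hb⟩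
  have hba : IsUnit (b⁻¹ * a).det := det_mul b⁻¹ a ▸ (isUnit_nonsing_inv_det b hb).mul ha
  have hν : IsUnit (fromBlocks (b⁻¹ * a) 0 0 1).det :=
    isUnit_det_fromBlocks_zero₂₁.mpr ⟨hba, by simp⟩
  have hud : IsUnit (fromBlocks 1 A 0 1 * fromBlocks a 0 0 b).det := by
    rw [det_mul]
    exact hu.mul hd
  rw [hπ _ _ hud hk, hπ _ _ hu hd, fromBlocks_zero_zero_eq_mul a hb, hπ _ _ hbb hν]
  simp only [Module.End.mul_apply]
  rw [hU, hH b hb]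

end Iwasawa

theorem stmt16_general (n : ℕ) {V : Type*} [AddCommGroup V] [Module ℂ V] [TopologicalSpace V]
    (π : Matrix (Fin n ⊕ Fin n) (Fin n ⊕ Fin n) ℝ → (V →ₗ[ℂ] V))
    (hπ : ∀ a b : Matrix (Fin n ⊕ Fin n) (Fin n ⊕ Fin n) ℝ,
      IsUnit a.det → IsUnit b.det → π (a * b) = π a * π b)
    (hπK : Continuous fun p :
        {k : Matrix (Fin n ⊕ Fin n) (Fin n ⊕ Fin n) ℝ //
          k ∈ Matrix.orthogonalGroup (Fin n ⊕ Fin n) ℝ} × V => π p.1.val p.2)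
    (lam : V →ₗ[ℂ] ℂ)
    (M : ℝ) (β : Seminorm ℂ V) (hβ : Continuous β)
    (hbound : ∀ h : Matrix (Fin n) (Fin n) ℝ, IsUnit h.det → ∀ v : V,
      ‖lam (π (Matrix.fromBlocks h 0 0 1) v)‖ ≤ |h.det| ^ (-M) * β v)
    (Ψ : Matrix (Fin n) (Fin n) ℝ → ℂ) (hΨ : ∀ A, ‖Ψ A‖ = 1)
    (hU : ∀ (A : Matrix (Fin n) (Fin n) ℝ) (v : V),
      lam (π (Matrix.fromBlocks 1 A 0 1) v) = Ψ A * lam v)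
    (hH : ∀ c : Matrix (Fin n) (Fin n) ℝ, IsUnit c.det → ∀ v : V,
      lam (π (Matrix.fromBlocks c 0 0 c) v) = lam v) :
    ∃ γ : Seminorm ℂ V, Continuous γ ∧
      ∀ (A : Matrix (Fin n) (Fin n) ℝ) (a b : Matrix (Fin n) (Fin n) ℝ),
        IsUnit a.det → IsUnit b.det →
        ∀ k ∈ Matrix.orthogonalGroup (Fin n ⊕ Fin n) ℝ, ∀ v : V,
          ‖lam (π (Matrix.fromBlocks 1 A 0 1 * Matrix.fromBlocks a 0 0 b * k) v)‖ ≤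
            |(b⁻¹ * a).det| ^ (-M) * γ v := by
  have : CompactSpace (Matrix.orthogonalGroup (Fin n ⊕ Fin n) ℝ) :=
    isCompact_iff_compactSpace.mp (Matrix.isCompact_unitaryGroup _ ℝ)
  obtain ⟨γ, hγ, hβγ⟩ := Seminorm.exists_continuous_forall_comp_le
    (fun k : Matrix.orthogonalGroup (Fin n ⊕ Fin n) ℝ => π k) hπK β hβ
  refine ⟨γ, hγ, fun A a b ha hb k hk v => ?_⟩
  have hba : IsUnit (b⁻¹ * a).det :=
    Matrix.det_mul b⁻¹ a ▸ (Matrix.isUnit_nonsing_inv_det b hb).mul ha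
  rw [apply_iwasawa_eq π hπ lam Ψ hU hH A ha hb (Matrix.UnitaryGroup.det_isUnit ⟨k, hk⟩),
    norm_mul, hΨ, one_mul]
  calc ‖lam (π (Matrix.fromBlocks (b⁻¹ * a) 0 0 1) (π k v))‖
      ≤ |(b⁻¹ * a).det| ^ (-M) * β (π k v) := hbound _ hba _
    _ ≤ |(b⁻¹ * a).det| ^ (-M) * γ v := by gcongr; exact hβγ ⟨k, hk⟩ v

/-- Suppose `λ` is a continuous functional on a smooth Fréchet representation `(π,V)` of
`GL_{2n}(ℝ)` (matrices indexed by `Fin n ⊕ Fin n`) such that for some `M > 0` and a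
continuous seminorm `β`, `|λ(π(ν(h))v)| ≤ |det h|^{-M}·β(v)` for all `h ∈ GL_n(ℝ)`
(`ν(h) = diag(h, Id)`), `λ(π(u)v) = Ψ(u)λ(v)` for `u ∈ U` with `|Ψ(u)| = 1`, and `λ` is
invariant under `H = {diag(c,c)}` (on which `Ψ` is trivial). Then there is a continuous
seminorm `γ` with `|λ(π(g)v)| ≤ |det(b⁻¹a)|^{-M}·γ(v)` for every
`g = u·diag(a,b)·k` in Iwasawa form (`u ∈ U`, `a,b ∈ GL_n(ℝ)`, `k ∈ O(2n)`). -/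
theorem stmt16 (n : ℕ) {V : Type*} [AddCommGroup V] [Module ℂ V] [TopologicalSpace V]
    [IsTopologicalAddGroup V] [ContinuousSMul ℂ V]
    (π : Matrix (Fin n ⊕ Fin n) (Fin n ⊕ Fin n) ℝ → (V →ₗ[ℂ] V))
    (hπ : ∀ a b : Matrix (Fin n ⊕ Fin n) (Fin n ⊕ Fin n) ℝ,
      IsUnit a.det → IsUnit b.det → π (a * b) = π a * π b)
    (hπK : Continuous fun p :
        {k : Matrix (Fin n ⊕ Fin n) (Fin n ⊕ Fin n) ℝ //
          k ∈ Matrix.orthogonalGroup (Fin n ⊕ Fin n) ℝ} × V => π p.1.val p.2)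
    (lam : V →ₗ[ℂ] ℂ) (hlam : Continuous lam)
    (M : ℝ) (hM : 0 < M) (β : Seminorm ℂ V) (hβ : Continuous β)
    (hbound : ∀ h : Matrix (Fin n) (Fin n) ℝ, IsUnit h.det → ∀ v : V,
      ‖lam (π (Matrix.fromBlocks h 0 0 1) v)‖ ≤ |h.det| ^ (-M) * β v)
    (Ψ : Matrix (Fin n) (Fin n) ℝ → ℂ) (hΨ : ∀ A, ‖Ψ A‖ = 1)
    (hU : ∀ (A : Matrix (Fin n) (Fin n) ℝ) (v : V),
      lam (π (Matrix.fromBlocks 1 A 0 1) v) = Ψ A * lam v)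
    (hH : ∀ c : Matrix (Fin n) (Fin n) ℝ, IsUnit c.det → ∀ v : V,
      lam (π (Matrix.fromBlocks c 0 0 c) v) = lam v) :
    ∃ γ : Seminorm ℂ V, Continuous γ ∧
      ∀ (A : Matrix (Fin n) (Fin n) ℝ) (a b : Matrix (Fin n) (Fin n) ℝ),
        IsUnit a.det → IsUnit b.det →
        ∀ k ∈ Matrix.orthogonalGroup (Fin n ⊕ Fin n) ℝ, ∀ v : V,
          ‖lam (π (Matrix.fromBlocks 1 A 0 1 * Matrix.fromBlocks a 0 0 b * k) v)‖ ≤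
            |(b⁻¹ * a).det| ^ (-M) * γ v :=
  stmt16_general n π hπ hπK lam M β hβ hbound Ψ hΨ hU hH
end

section
/- Let Φ ∈ 𝒮(Mat(2n×2n,ℝ)), M ∈ ℝ, and suppose f : GL_{2n}(ℝ) → ℂ is measurable with |f(g)| ≤ |det(b^{-1}a)|^{-M} for g = u·diag(a,b)·k in Iwasawa coordinates (u ∈ U block-unipotent, a,b ∈ GL_n(ℝ), k ∈ O(2n)). Then there exists s₀ ∈ ℝ such that for all s ∈ ℂ with Re(s) > s₀, the integral ∫_{GL_{2n}(ℝ)} |f(g)·Φ(g)|·|det g|^{Re(s)+n-1/2} d^×g is finite, where d^×g is Haar measure. -/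
/-!
Every invertible `X` factors as `X = u · diag(a, b) · k` with `k` orthogonal and `a`, `b` blocks of
`X kᵀ`, so their entries are `O(‖X‖)` and `|det X| = |det a| |det b|`. Hence
`|det (b⁻¹ a)|^{±1} ≤ max(|det a|, |det b|)² / |det X|`, and the growth hypothesis gives
`|f X| |det X|^{|M|} = O((1 + ‖X‖)^{2n|M|})`. For `Re s ≥ n + 1/2 + |M|` the remaining power of
`|det X| = O((1 + ‖X‖)^{2n})` is nonnegative, so the integrand is a polynomial in `1 + ‖X‖` times
`‖Φ X‖`, which is integrable because `Φ` is a Schwartz function.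
-/

open MeasureTheory
open scoped Matrix
open Matrix Module

theorem Real.div_rpow_neg_mul_mul_rpow_abs_le {x y B : ℝ} (hx : 0 < x) (hy : 0 < y)
    (hxB : x ≤ B) (hyB : y ≤ B) (M : ℝ) :
    (x / y) ^ (-M) * (x * y) ^ |M| ≤ (B ^ 2) ^ |M| := by
  rcases le_total 0 M with hM | hM
  · rw [abs_of_nonneg hM, Real.rpow_neg (by positivity), ← Real.inv_rpow (by positivity),
      inv_div, ← Real.mul_rpow (by positivity) (by positivity)]
    have : y / x * (x * y) = y ^ 2 := by field_simp
    rw [this]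
    gcongr
  · rw [abs_of_nonpos hM, ← Real.mul_rpow (by positivity) (by positivity)]
    have : x / y * (x * y) = x ^ 2 := by field_simp
    rw [this]
    gcongr
    linarith

theorem SchwartzMap.integrable_one_add_norm_rpow_mul {D V : Type*} [NormedAddCommGroup D]
    [NormedSpace ℝ D] [MeasurableSpace D] [BorelSpace D] [SecondCountableTopology D]
    [NormedAddCommGroup V] [NormedSpace ℝ V] (μ : Measure D) [μ.HasTemperateGrowth]
    (Φ : SchwartzMap D V) (q : ℝ) : Integrable (fun x => (1 + ‖x‖) ^ q * ‖Φ x‖) μ := by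
  set N := ⌈q⌉₊
  have hmeas : Continuous fun x => (1 + ‖x‖) ^ q * ‖Φ x‖ :=
    ((continuous_const.add continuous_norm).rpow_const fun x =>
      Or.inl (add_pos_of_pos_of_nonneg one_pos (norm_nonneg x)).ne').mul Φ.continuous.norm
  refine (((Φ.integrable_pow_mul μ 0).add (Φ.integrable_pow_mul μ N)).const_mul
    (2 ^ (N - 1))).mono' hmeas.aestronglyMeasurable (Filter.Eventually.of_forall fun x => ?_)
  rw [Real.norm_of_nonneg (by positivity)]
  calc (1 + ‖x‖) ^ q * ‖Φ x‖ ≤ (1 + ‖x‖) ^ (N : ℝ) * ‖Φ x‖ := by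
        gcongr
        · linarith [norm_nonneg x]
        · exact Nat.le_ceil q
    _ ≤ 2 ^ (N - 1) * (1 ^ N + ‖x‖ ^ N) * ‖Φ x‖ := by
        rw [Real.rpow_natCast]
        gcongr
        exact add_pow_le zero_le_one (norm_nonneg x) N
    _ = _ := by simp only [one_pow, Pi.add_apply]; ring

theorem MeasureTheory.setLIntegral_ofReal_lt_top_of_le {α : Type*} [MeasurableSpace α]
    {μ : Measure α} {s : Set α} (hs : MeasurableSet s) {f g : α → ℝ} (hg : Integrable g μ)
    (hfg : ∀ x ∈ s, f x ≤ g x) : ∫⁻ x in s, ENNReal.ofReal (f x) ∂μ < ⊤ :=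
  calc ∫⁻ x in s, ENNReal.ofReal (f x) ∂μ ≤ ∫⁻ x in s, ENNReal.ofReal (g x) ∂μ :=
        setLIntegral_mono' hs fun x hx => ENNReal.ofReal_le_ofReal (hfg x hx)
    _ < ⊤ := hg.restrict.lintegral_lt_top

theorem Matrix.measurableSet_setOf_det_ne_zero {ι : Type*} [Fintype ι] [DecidableEq ι] :
    MeasurableSet {X : ι → ι → ℝ | (Matrix.of X).det ≠ 0} :=
  (show Continuous fun X : ι → ι → ℝ => (Matrix.of X).det from
    continuous_id.matrix_det).measurable (measurableSet_singleton 0).compl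

theorem Matrix.abs_det_le_of_abs_le {ι : Type*} [Fintype ι] [DecidableEq ι] {A : Matrix ι ι ℝ}
    {C : ℝ} (hA : ∀ i j, |A i j| ≤ C) :
    |A.det| ≤ (Fintype.card ι).factorial * C ^ Fintype.card ι := by
  simpa only [AbsoluteValue.abs_apply, nsmul_eq_mul] using det_le (abv := AbsoluteValue.abs) hA

theorem Matrix.abs_mul_apply_le_of_mem_orthogonalGroup {ι : Type*} [Fintype ι] [DecidableEq ι]
    {X Q : Matrix ι ι ℝ} (hQ : Q ∈ orthogonalGroup ι ℝ) {C : ℝ} (hX : ∀ i j, |X i j| ≤ C)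
    (i j : ι) : |(X * Q) i j| ≤ Fintype.card ι * C :=
  calc |(X * Q) i j| ≤ ∑ l, |X i l| * |Q l j| := by
        simpa only [mul_apply, abs_mul] using
          Finset.abs_sum_le_sum_abs (fun l => X i l * Q l j) .univ
    _ ≤ ∑ _l : ι, C := by
        gcongr with l
        simpa using mul_le_mul (hX i l) (entry_norm_bound_of_unitary hQ l j) (abs_nonneg _)
          ((abs_nonneg _).trans (hX i l))
    _ = Fintype.card ι * C := by simp

theorem Matrix.abs_det_of_mem_orthogonalGroup {ι : Type*} [Fintype ι] [DecidableEq ι]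
    {Q : Matrix ι ι ℝ} (hQ : Q ∈ orthogonalGroup ι ℝ) : |Q.det| = 1 :=
  CStarRing.norm_of_mem_unitary (det_of_mem_unitary hQ)

section Iwasawa

variable {m p : Type*} [Fintype m] [Fintype p] [DecidableEq m] [DecidableEq p]

theorem Matrix.eq_fromBlocks_one_mul_fromBlocks_of_toBlocks₂₁_eq_zero {R : Type*} [CommRing R]
    (T : Matrix (m ⊕ p) (m ⊕ p) R) (hT : T.toBlocks₂₁ = 0) (hd : IsUnit T.toBlocks₂₂.det) :
    T = fromBlocks 1 (T.toBlocks₁₂ * T.toBlocks₂₂⁻¹) 0 1 *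
      fromBlocks T.toBlocks₁₁ 0 0 T.toBlocks₂₂ := by
  rw [fromBlocks_multiply]
  conv_lhs => rw [← fromBlocks_toBlocks T, hT]
  simp [nonsing_inv_mul_cancel_right _ _ hd]

theorem Matrix.exists_mem_orthogonalGroup_toBlocks₂₁_mul_eq_zero
    (X : Matrix (m ⊕ p) (m ⊕ p) ℝ) (hX : IsUnit X.det) :
    ∃ Q ∈ orthogonalGroup (m ⊕ p) ℝ, (X * Q).toBlocks₂₁ = 0 := by
  -- The columns of `Q` indexed by `m` form an orthonormal basis of `Wᗮ`, where `W` is spanned by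
  -- the rows of `X` indexed by `p`; the remaining columns complete it to an orthonormal basis.
  let row : p → EuclideanSpace ℝ (m ⊕ p) := fun i => WithLp.toLp 2 (X (.inr i))
  let W := Submodule.span ℝ (Set.range row)
  have hrow : LinearIndependent ℝ row :=
    ((linearIndependent_rows_iff_isUnit.mpr ((isUnit_iff_isUnit_det X).mpr hX)).comp _
      Sum.inr_injective).map' (WithLp.linearEquiv 2 ℝ _).symm.toLinearMap (LinearEquiv.ker _)
  have hWperp : finrank ℝ Wᗮ = Fintype.card m := by
    have := W.finrank_add_finrank_orthogonal
    rw [finrank_span_eq_card hrow, finrank_euclideanSpace, Fintype.card_sum] at this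
    omega
  let u : OrthonormalBasis m ℝ Wᗮ :=
    (stdOrthonormalBasis ℝ Wᗮ).reindex ((finCongr hWperp).trans (Fintype.equivFin m).symm)
  let v : m ⊕ p → EuclideanSpace ℝ (m ⊕ p) := Sum.elim (fun j => u j) 0
  have hv : Orthonormal ℝ ((Set.range (Sum.inl : m → m ⊕ p)).domRestrict v) := by
    have := (u.orthonormal.comp_linearIsometry Wᗮ.subtypeₗᵢ).comp _
      (Equiv.ofInjective (Sum.inl : m → m ⊕ p) Sum.inl_injective).symm.injective
    convert this using 1
    ext ⟨_, j, rfl⟩ : 1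
    simp [v]
  obtain ⟨b, hb⟩ := Orthonormal.exists_orthonormalBasis_extension_of_card_eq
    finrank_euclideanSpace hv
  refine ⟨(EuclideanSpace.basisFun _ ℝ).toBasis.toMatrix b,
    OrthonormalBasis.toMatrix_orthonormalBasis_mem_orthogonal _ _, ?_⟩
  ext i j
  have hbW : b (.inl j) ∈ Wᗮ := by rw [hb _ ⟨j, rfl⟩]; exact (u j).2
  have h0 := Submodule.inner_right_of_mem_orthogonal
    (Submodule.subset_span (Set.mem_range_self (f := row) i)) hbW
  simpa [toBlocks₂₁, Matrix.mul_apply, Basis.toMatrix_apply, PiLp.inner_apply, row, mul_comm]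
    using h0

theorem Matrix.exists_iwasawa_decomposition (X : Matrix (m ⊕ p) (m ⊕ p) ℝ) (hX : IsUnit X.det)
    {C : ℝ} (hC : ∀ i j, |X i j| ≤ C) :
    ∃ (A : Matrix m p ℝ) (a : Matrix m m ℝ) (b : Matrix p p ℝ)
      (k : Matrix (m ⊕ p) (m ⊕ p) ℝ), k ∈ orthogonalGroup (m ⊕ p) ℝ ∧ IsUnit a.det ∧
      IsUnit b.det ∧ X = fromBlocks 1 A 0 1 * fromBlocks a 0 0 b * k ∧
      |X.det| = |a.det| * |b.det| ∧ (∀ i j, |a i j| ≤ Fintype.card (m ⊕ p) * C) ∧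
      ∀ i j, |b i j| ≤ Fintype.card (m ⊕ p) * C := by
  obtain ⟨Q, hQ, hT⟩ := exists_mem_orthogonalGroup_toBlocks₂₁_mul_eq_zero X hX
  set T := X * Q
  have hXT : X = T * star Q := by rw [mul_assoc, Unitary.mul_star_self_of_mem hQ, mul_one]
  have hdetT : T.det = T.toBlocks₁₁.det * T.toBlocks₂₂.det := by
    conv_lhs => rw [← fromBlocks_toBlocks T, hT]
    exact det_fromBlocks_zero₂₁ _ _ _
  have hk := Unitary.star_mem hQ
  have hunit : IsUnit (T.toBlocks₁₁.det * T.toBlocks₂₂.det) := by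
    rw [← hdetT, det_mul]
    exact hX.mul (isUnit_iff_ne_zero.mpr
      (by simp [← abs_ne_zero, abs_det_of_mem_orthogonalGroup hQ]))
  obtain ⟨ha, hb⟩ := IsUnit.mul_iff.mp hunit
  refine ⟨T.toBlocks₁₂ * T.toBlocks₂₂⁻¹, _, _, star Q, hk, ha, hb, ?_, ?_,
    fun i j => abs_mul_apply_le_of_mem_orthogonalGroup hQ hC _ _,
    fun i j => abs_mul_apply_le_of_mem_orthogonalGroup hQ hC _ _⟩
  · rw [← eq_fromBlocks_one_mul_fromBlocks_of_toBlocks₂₁_eq_zero T hT hb]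
    exact hXT
  · rw [hXT, det_mul, abs_mul, abs_det_of_mem_orthogonalGroup hk, hdetT, abs_mul, mul_one]

def HasIwasawaBound {E : Type*} [Norm E] (M : ℝ) (f : Matrix (m ⊕ m) (m ⊕ m) ℝ → E) :
    Prop :=
  ∀ A a b : Matrix m m ℝ, IsUnit a.det → IsUnit b.det → ∀ k ∈ orthogonalGroup (m ⊕ m) ℝ,
    ‖f (fromBlocks 1 A 0 1 * fromBlocks a 0 0 b * k)‖ ≤ |(b⁻¹ * a).det| ^ (-M)

theorem HasIwasawaBound.norm_mul_abs_det_rpow_le {E : Type*} [Norm E] {M : ℝ}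
    {f : Matrix (m ⊕ m) (m ⊕ m) ℝ → E} (hf : HasIwasawaBound M f)
    {X : Matrix (m ⊕ m) (m ⊕ m) ℝ} (hX : IsUnit X.det) {C : ℝ}
    (hC : ∀ i j, |X i j| ≤ C) :
    ‖f X‖ * |X.det| ^ |M| ≤
      (((Fintype.card m).factorial * (Fintype.card (m ⊕ m) * C) ^ Fintype.card m) ^ 2) ^ |M| := by
  obtain ⟨A, a, b, k, hk, ha, hb, rfl, hdet, haC, hbC⟩ := exists_iwasawa_decomposition X hX hC
  have hba : |(b⁻¹ * a).det| = |a.det| / |b.det| := by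
    rw [det_mul, det_nonsing_inv, Ring.inverse_eq_inv, abs_mul, abs_inv, div_eq_inv_mul]
  rw [hdet]
  calc _ ≤ (|a.det| / |b.det|) ^ (-M) * (|a.det| * |b.det|) ^ |M| := by
        gcongr
        exact hba ▸ hf A a b ha hb k hk
    _ ≤ _ := Real.div_rpow_neg_mul_mul_rpow_abs_le (abs_pos.2 ha.ne_zero) (abs_pos.2 hb.ne_zero)
        (abs_det_le_of_abs_le haC) (abs_det_le_of_abs_le hbC) M

theorem HasIwasawaBound.exists_norm_mul_abs_det_rpow_add_le {E : Type*} [Norm E] {M : ℝ}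
    {f : Matrix (m ⊕ m) (m ⊕ m) ℝ → E} (hf : HasIwasawaBound M f)
    {e : ℝ} (he : 0 ≤ e) :
    ∃ K q : ℝ, ∀ X : Matrix (m ⊕ m) (m ⊕ m) ℝ, IsUnit X.det → ∀ u, 0 ≤ u →
      (∀ i j, |X i j| ≤ u) → ‖f X‖ * |X.det| ^ (|M| + e) ≤ K * u ^ q := by
  set k := Fintype.card m
  set N := Fintype.card (m ⊕ m)
  refine ⟨(((k.factorial : ℝ) * N ^ k) ^ 2) ^ |M| * (N.factorial : ℝ) ^ e, 2 * k * |M| + N * e,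
    fun X hX u hu hXu => ?_⟩
  have hD : 0 < |X.det| := abs_pos.2 hX.ne_zero
  calc ‖f X‖ * |X.det| ^ (|M| + e) = ‖f X‖ * |X.det| ^ |M| * |X.det| ^ e := by
        rw [Real.rpow_add hD, mul_assoc]
    _ ≤ (((k.factorial : ℝ) * (N * u) ^ k) ^ 2) ^ |M| * (N.factorial * u ^ N) ^ e := by
        gcongr
        · exact hf.norm_mul_abs_det_rpow_le hX hXu
        · exact abs_det_le_of_abs_le hXu
    _ = (((k.factorial : ℝ) * N ^ k) ^ 2 * u ^ (2 * k)) ^ |M| * (N.factorial * u ^ N) ^ e := by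
        ring_nf
    _ = _ := by
        rw [Real.mul_rpow (by positivity) (by positivity),
          Real.mul_rpow (by positivity) (by positivity), ← Real.rpow_natCast u (2 * k),
          ← Real.rpow_natCast u N, ← Real.rpow_mul hu, ← Real.rpow_mul hu,
          Real.rpow_add_of_nonneg hu (by positivity) (by positivity)]
        push_cast
        ring

end Iwasawa

theorem stmt17_general (n : ℕ) (M : ℝ)
    (Φ : SchwartzMap ((Fin n ⊕ Fin n) → (Fin n ⊕ Fin n) → ℝ) ℂ)
    (f : ((Fin n ⊕ Fin n) → (Fin n ⊕ Fin n) → ℝ) → ℂ)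
    (hbd : ∀ (A : Matrix (Fin n) (Fin n) ℝ) (a b : Matrix (Fin n) (Fin n) ℝ),
      IsUnit a.det → IsUnit b.det →
      ∀ k : Matrix (Fin n ⊕ Fin n) (Fin n ⊕ Fin n) ℝ,
        k ∈ Matrix.orthogonalGroup (Fin n ⊕ Fin n) ℝ →
        ‖f (fun i j => ((Matrix.fromBlocks 1 A 0 1 * Matrix.fromBlocks a 0 0 b * k :
            Matrix (Fin n ⊕ Fin n) (Fin n ⊕ Fin n) ℝ)) i j)‖ ≤
          |(b⁻¹ * a).det| ^ (-M)) :
    ∃ s₀ : ℝ, ∀ s : ℂ, s₀ < s.re →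
      (∫⁻ X in {X : (Fin n ⊕ Fin n) → (Fin n ⊕ Fin n) → ℝ | (Matrix.of X).det ≠ 0},
          ENNReal.ofReal
            (‖f X‖ * ‖Φ X‖ * |(Matrix.of X).det| ^ (s.re + n - 1 / 2) *
              (|(Matrix.of X).det| ^ (2 * n))⁻¹)) < ⊤ := by
  refine ⟨n + 1 / 2 + |M|, fun s hs => ?_⟩
  obtain ⟨K, q, hK⟩ := HasIwasawaBound.exists_norm_mul_abs_det_rpow_add_le hbd
    (e := s.re - n - 1 / 2 - |M|) (by linarith)
  -- Instance search does not reach the Haar-measure instance through the nested `Measure.pi`.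
  have : (volume : Measure ((Fin n ⊕ Fin n) → (Fin n ⊕ Fin n) → ℝ)).HasTemperateGrowth :=
    Measure.IsAddHaarMeasure.instHasTemperateGrowth
  refine setLIntegral_ofReal_lt_top_of_le measurableSet_setOf_det_ne_zero
    ((Φ.integrable_one_add_norm_rpow_mul volume q).const_mul K) fun X hX => ?_
  have hXu : ∀ i j, |Matrix.of X i j| ≤ 1 + ‖X‖ := fun i j =>
    ((norm_le_pi_norm (X i) j).trans (norm_le_pi_norm X i)).trans
      (le_add_of_nonneg_left zero_le_one)
  set D := |(Matrix.of X).det|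
  have hD : 0 < D := abs_pos.2 hX
  have hexp : D ^ (s.re + n - 1 / 2) * (D ^ (2 * n))⁻¹ = D ^ (|M| + (s.re - n - 1 / 2 - |M|)) := by
    rw [← Real.rpow_natCast, ← Real.rpow_neg hD.le, ← Real.rpow_add hD]
    push_cast
    ring_nf
  calc ‖f X‖ * ‖Φ X‖ * D ^ (s.re + n - 1 / 2) * (D ^ (2 * n))⁻¹
      = ‖f X‖ * D ^ (|M| + (s.re - n - 1 / 2 - |M|)) * ‖Φ X‖ := by
        rw [← hexp]
        ring
    _ ≤ K * (1 + ‖X‖) ^ q * ‖Φ X‖ :=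
        mul_le_mul_of_nonneg_right (hK _ (isUnit_iff_ne_zero.2 hX) _ (by positivity) hXu)
          (norm_nonneg _)
    _ = K * ((1 + ‖X‖) ^ q * ‖Φ X‖) := mul_assoc _ _ _

/-- Let `Φ ∈ 𝒮(Mat(2n×2n,ℝ))` (matrices indexed by `Fin n ⊕ Fin n`), `M ∈ ℝ`, and let
`f : GL_{2n}(ℝ) → ℂ` be measurable with `|f(g)| ≤ |det(b⁻¹a)|^{-M}` for
`g = u·diag(a,b)·k` in Iwasawa coordinates (`u ∈ U` block-unipotent, `a,b ∈ GL_n(ℝ)`,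
`k ∈ O(2n)`). Then there is `s₀ ∈ ℝ` such that for all `s` with `Re(s) > s₀` the integral
`∫_{GL_{2n}(ℝ)} |f(g)Φ(g)|·|det g|^{Re(s)+n-1/2} d^×g` is finite, where the Haar measure
`d^×g` is `|det g|^{-2n}` times Lebesgue measure. -/
theorem stmt17 (n : ℕ) (M : ℝ)
    (Φ : SchwartzMap ((Fin n ⊕ Fin n) → (Fin n ⊕ Fin n) → ℝ) ℂ)
    (f : ((Fin n ⊕ Fin n) → (Fin n ⊕ Fin n) → ℝ) → ℂ) (hf : Measurable f)
    (hbd : ∀ (A : Matrix (Fin n) (Fin n) ℝ) (a b : Matrix (Fin n) (Fin n) ℝ),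
      IsUnit a.det → IsUnit b.det →
      ∀ k : Matrix (Fin n ⊕ Fin n) (Fin n ⊕ Fin n) ℝ,
        k ∈ Matrix.orthogonalGroup (Fin n ⊕ Fin n) ℝ →
        ‖f (fun i j => ((Matrix.fromBlocks 1 A 0 1 * Matrix.fromBlocks a 0 0 b * k :
            Matrix (Fin n ⊕ Fin n) (Fin n ⊕ Fin n) ℝ)) i j)‖ ≤
          |(b⁻¹ * a).det| ^ (-M)) :
    ∃ s₀ : ℝ, ∀ s : ℂ, s₀ < s.re →
      (∫⁻ X in {X : (Fin n ⊕ Fin n) → (Fin n ⊕ Fin n) → ℝ | (Matrix.of X).det ≠ 0},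
          ENNReal.ofReal
            (‖f X‖ * ‖Φ X‖ * |(Matrix.of X).det| ^ (s.re + n - 1 / 2) *
              (|(Matrix.of X).det| ^ (2 * n))⁻¹)) < ⊤ :=
  stmt17_general n M Φ f hbd
end

section
/- Multiplicativity of the finite part: let V be a Fréchet space, L : V → Hol(Ω) a linear map into holomorphic functions on a domain Ω ∋ 1/2, and suppose that for each polynomial p on ℂ there is a continuous linear operator D_p : V → V with L(D_p v)(s) = p(s)·L(v)(s) for all s. If there is a line Re(s) = c in Ω and for each p a continuous seminorm β_p with sup_{Re s = c} |p(s)·L(v)(s)| ≤ β_p(v), and similarly on a second line Re(s) = c' < 1/2 < c, and if for each fixed v the function p(s)L(v)(s) is bounded at infinity in the strip [c',c] + iℝ, then v ↦ L(v)(1/2) is a continuous linear functional on V. -/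
/-! Take `p = 1`. On the closed strip `c' ≤ Re s ≤ c` the function `L v` is holomorphic
and bounded at infinity, so by Phragmén–Lindelöf it is bounded by its supremum on the two boundary
lines, hence `‖L v (1/2)‖ ≤ max (β v) (β' v)`. A linear functional dominated by a continuous
seminorm is continuous. -/

open Complex Set Filter

theorem PhragmenLindelof.vertical_strip_of_bounded {E : Type*} [NormedAddCommGroup E]
    [NormedSpace ℂ E] {f : ℂ → E} {a b M C Δ : ℝ}
    (hd : DifferentiableOn ℂ f (re ⁻¹' Icc a b))
    (hbdd : ∀ z : ℂ, a ≤ z.re → z.re ≤ b → Δ ≤ |z.im| → ‖f z‖ ≤ C)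
    (ha : ∀ z : ℂ, z.re = a → ‖f z‖ ≤ M) (hb : ∀ z : ℂ, z.re = b → ‖f z‖ ≤ M)
    {z : ℂ} (hza : a ≤ z.re) (hzb : z.re ≤ b) : ‖f z‖ ≤ M := by
  rcases (hza.trans hzb).eq_or_lt with rfl | hab
  · exact ha z (le_antisymm hzb hza)
  have hcl : closure (re ⁻¹' Ioo a b) ⊆ re ⁻¹' Icc a b := by
    rw [closure_preimage_re, closure_Ioo hab.ne]
  refine PhragmenLindelof.vertical_strip (hd.mono hcl).diffContOnCl
    ⟨0, div_pos Real.pi_pos (sub_pos.2 hab), 0, ?_⟩ ha hb hza hzb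
  -- with `c = B = 0` the growth condition just says `f = O(1)`
  simp only [zero_mul, Real.exp_zero]
  refine Asymptotics.IsBigO.of_bound C ?_
  have hlarge : ∀ᶠ z : ℂ in comap (_root_.abs ∘ im) atTop, Δ ≤ |z.im| :=
    tendsto_comap.eventually (eventually_ge_atTop Δ)
  filter_upwards [hlarge.filter_mono inf_le_left, mem_inf_of_right (mem_principal_self _)]
    with w hw ⟨hwa, hwb⟩
  simpa using hbdd w hwa.le hwb.le hw

theorem LinearMap.continuous_of_norm_le_seminorm {𝕜 V E : Type*} [NontriviallyNormedField 𝕜]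
    [AddCommGroup V] [Module 𝕜 V] [TopologicalSpace V] [IsTopologicalAddGroup V]
    [NormedAddCommGroup E] [NormedSpace 𝕜 E] (ℓ : V →ₗ[𝕜] E) {q : Seminorm 𝕜 V}
    (hq : Continuous q) (hℓ : ∀ v, ‖ℓ v‖ ≤ q v) : Continuous ℓ :=
  (norm_withSeminorms 𝕜 E).continuous_of_continuous_comp ℓ fun _ ↦ Seminorm.continuous_of_le hq hℓ

theorem stmt18_general {V : Type*} [AddCommGroup V] [Module ℂ V] [TopologicalSpace V]
    [IsTopologicalAddGroup V]
    (Ω : Set ℂ) (c c' : ℝ) (hc' : c' < 1 / 2) (hc : 1 / 2 < c)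
    (hstrip : {s : ℂ | c' ≤ s.re ∧ s.re ≤ c} ⊆ Ω)
    (L : V →ₗ[ℂ] (ℂ → ℂ))
    (hhol : ∀ v : V, DifferentiableOn ℂ (L v) Ω)
    (hline : ∀ p : Polynomial ℂ, ∃ β : Seminorm ℂ V, Continuous β ∧
      ∀ (v : V) (s : ℂ), s.re = c → ‖p.eval s * L v s‖ ≤ β v)
    (hline' : ∀ p : Polynomial ℂ, ∃ β : Seminorm ℂ V, Continuous β ∧
      ∀ (v : V) (s : ℂ), s.re = c' → ‖p.eval s * L v s‖ ≤ β v)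
    (hdecay : ∀ (v : V) (p : Polynomial ℂ), ∃ C Δ : ℝ, 0 < Δ ∧
      ∀ s : ℂ, c' ≤ s.re → s.re ≤ c → Δ ≤ |s.im| → ‖p.eval s * L v s‖ ≤ C) :
    Continuous fun v : V => L v (1 / 2) := by
  obtain ⟨β, hβ, hβL⟩ := hline 1
  obtain ⟨β', hβ', hβ'L⟩ := hline' 1
  simp only [Polynomial.eval_one, one_mul] at hβL hβ'L
  refine ((LinearMap.proj (1 / 2 : ℂ)).comp L).continuous_of_norm_le_seminorm (q := β ⊔ β')
    (by rw [Seminorm.coe_sup]; exact hβ.sup hβ') fun v ↦ ?_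
  obtain ⟨C, Δ, -, hbdd⟩ := hdecay v 1
  simp only [Polynomial.eval_one, one_mul] at hbdd
  have h_half : (1 / 2 : ℂ).re = 1 / 2 := by norm_num
  exact PhragmenLindelof.vertical_strip_of_bounded ((hhol v).mono fun z hz ↦ hstrip hz) hbdd
    (fun z hz ↦ (hβ'L v z hz).trans (le_max_right _ _))
    (fun z hz ↦ (hβL v z hz).trans (le_max_left _ _))
    (h_half ▸ hc'.le) (h_half ▸ hc.le)

/-- Multiplicativity of the finite part: let `V` be a Fréchet space, `L : V → Hol(Ω)` a
linear map into holomorphic functions on an open domain `Ω ∋ 1/2` containing the closed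
strip `c' ≤ Re(s) ≤ c` with `c' < 1/2 < c`. Suppose for each polynomial `p` there is a
continuous linear operator `D_p : V → V` with `L(D_p v)(s) = p(s)·L(v)(s)`, and for each
`p` continuous seminorms bounding `sup_{Re s = c} |p(s)L(v)(s)|` and
`sup_{Re s = c'} |p(s)L(v)(s)|`, and for each fixed `v` the function `p(s)L(v)(s)` is
bounded at infinity in the strip. Then `v ↦ L(v)(1/2)` is a continuous linear functional
on `V`. -/
theorem stmt18 {V : Type*} [AddCommGroup V] [Module ℂ V] [TopologicalSpace V]
    [IsTopologicalAddGroup V] [ContinuousSMul ℂ V]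
    (Ω : Set ℂ) (hΩ : IsOpen Ω) (c c' : ℝ) (hc' : c' < 1 / 2) (hc : 1 / 2 < c)
    (hstrip : {s : ℂ | c' ≤ s.re ∧ s.re ≤ c} ⊆ Ω)
    (L : V →ₗ[ℂ] (ℂ → ℂ))
    (hhol : ∀ v : V, DifferentiableOn ℂ (L v) Ω)
    (hD : ∀ p : Polynomial ℂ, ∃ D : V →ₗ[ℂ] V, Continuous D ∧
      ∀ (v : V) (s : ℂ), L (D v) s = p.eval s * L v s)
    (hline : ∀ p : Polynomial ℂ, ∃ β : Seminorm ℂ V, Continuous β ∧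
      ∀ (v : V) (s : ℂ), s.re = c → ‖p.eval s * L v s‖ ≤ β v)
    (hline' : ∀ p : Polynomial ℂ, ∃ β : Seminorm ℂ V, Continuous β ∧
      ∀ (v : V) (s : ℂ), s.re = c' → ‖p.eval s * L v s‖ ≤ β v)
    (hdecay : ∀ (v : V) (p : Polynomial ℂ), ∃ C Δ : ℝ, 0 < Δ ∧
      ∀ s : ℂ, c' ≤ s.re → s.re ≤ c → Δ ≤ |s.im| → ‖p.eval s * L v s‖ ≤ C) :
    Continuous fun v : V => L v (1 / 2) :=
  stmt18_general Ω c c' hc' hc hstrip L hhol hline hline' hdecay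
end
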